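/- arXiv:2305.08607 — 2 statements merged into one kernel-verified Lean document; each statement's English description precedes it below -/
import Mathlib

section
/- In DBEL, the positive introspection axiom is valid: for every model M, state s, agent a, and formula φ, if (M,s) ⊨ K_a φ and d(a,s) ≥ d(φ)+1, then (M,s) ⊨ K_a (P_a^{d(φ)} → K_a φ). -/
/-- Formulas of depth-bounded epistemic logic (DBEL). -/
inductive Form (A P : Type) : Type
  | atom : P → Form A P
  | eqd  : A → ℕ → Form A P
  | ged  : A → ℕ → Form A P
  | neg  : Form A P → Form A P
  | and  : Form A P → Form A P → Form A P
  | imp  : Form A P → Form A P → Form A P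
  | kinf : A → Form A P → Form A P
  | k    : A → Form A P → Form A P

namespace Form
/-- Modal depth of a formula. -/
def md {A P : Type} : Form A P → ℕ
  | atom _ => 0
  | eqd _ _ => 0
  | ged _ _ => 0
  | neg φ => φ.md
  | and φ ψ => max φ.md ψ.md
  | imp φ ψ => max φ.md ψ.md
  | kinf _ φ => φ.md + 1
  | k _ φ => φ.md + 1
end Form

/-- A DBEL model: states, equivalence relations, valuation, depth assignment. -/
structure Model (A P : Type) where
  S : Type
  r : A → S → S → Prop
  equiv : ∀ a, Equivalence (r a)
  V : S → P → Prop
  d : A → S → ℕ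

/-- DBEL satisfaction. -/
def sat {A P : Type} (M : Model A P) : M.S → Form A P → Prop
  | s, .atom p => M.V s p
  | s, .eqd a n => M.d a s = n
  | s, .ged a n => M.d a s ≥ n
  | s, .neg φ => ¬ sat M s φ
  | s, .and φ ψ => sat M s φ ∧ sat M s ψ
  | s, .imp φ ψ => sat M s φ → sat M s ψ
  | s, .kinf a φ => ∀ t, M.r a s t → sat M t φ
  | s, .k a φ => M.d a s ≥ φ.md ∧ ∀ t, M.r a s t → sat M t φ

/-- In DBEL, positive introspection is valid: if `(M,s) ⊨ K_a φ` and
`d(a,s) ≥ d(φ)+1`, then `(M,s) ⊨ K_a (P_a^{d(φ)} → K_a φ)`. -/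
theorem dbel_pos_introspection {A P : Type} (M : Model A P) (s : M.S) (a : A) (φ : Form A P)
    (h1 : sat M s (.k a φ)) (h2 : M.d a s ≥ φ.md + 1) :
    sat M s (.k a (.imp (.ged a φ.md) (.k a φ))) := by
  obtain ⟨hd, hk⟩ := h1
  refine ⟨?_, ?_⟩
  · simp [Form.md]; omega
  · intro t hst hdt
    exact ⟨hdt, fun u htu => hk u ((M.equiv a).trans hst htu)⟩
end

section
/- In DBEL, the negative introspection axiom is valid: for every model M, state s, agent a, and formula φ, if (M,s) ⊭ K_a φ and d(a,s) ≥ d(φ)+1, then (M,s) ⊨ K_a ¬K_a φ. -/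
/-- In DBEL, negative introspection is valid: if `(M,s) ⊭ K_a φ` and
`d(a,s) ≥ d(φ)+1`, then `(M,s) ⊨ K_a ¬K_a φ`. -/
theorem dbel_neg_introspection {A P : Type} (M : Model A P) (s : M.S) (a : A) (φ : Form A P)
    (h1 : ¬ sat M s (.k a φ)) (h2 : M.d a s ≥ φ.md + 1) :
    sat M s (.k a (.neg (.k a φ))) := by
  refine ⟨h2, fun t hst hk => ?_⟩
  have hknots : ¬ (∀ u, M.r a s u → sat M u φ) := fun h =>
    h1 ⟨Nat.le_of_succ_le h2, h⟩
  push_neg at hknots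
  obtain ⟨u, hsu, hu⟩ := hknots
  exact hu (hk.2 u ((M.equiv a).trans ((M.equiv a).symm hst) hsu))
end
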